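/- Let ℓ₁, ℓ₂, ℓ₃ be lines in P³ (2-dimensional subspaces of ℂ⁴) with primal Plücker matrices P₁, P₂, P₃, and let u ∈ ℂ⁴ be a vector not lying in any of the three subspaces ℓ₁, ℓ₂, ℓ₃. Then the three vectors P₁u, P₂u, P₃u ∈ ℂ⁴ are linearly dependent if and only if the three lines admit a transversal through u, i.e., there exists a 2-dimensional subspace W of ℂ⁴ with u ∈ W and W ∩ ℓ_i ≠ {0} for i = 1, 2, 3. -/

import Mathlib

open Matrix

/-- The primal Plücker matrix of a pair of vectors `x y : ℂ⁴`. -/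
noncomputable def primalMat (x y : Fin 4 → ℂ) : Matrix (Fin 4) (Fin 4) ℂ :=
  !![0, x 2 * y 3 - x 3 * y 2, -(x 1 * y 3 - x 3 * y 1), x 1 * y 2 - x 2 * y 1;
     -(x 2 * y 3 - x 3 * y 2), 0, x 0 * y 3 - x 3 * y 0, -(x 0 * y 2 - x 2 * y 0);
     x 1 * y 3 - x 3 * y 1, -(x 0 * y 3 - x 3 * y 0), 0, x 0 * y 1 - x 1 * y 0;
     -(x 1 * y 2 - x 2 * y 1), x 0 * y 2 - x 2 * y 0, -(x 0 * y 1 - x 1 * y 0), 0]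

/-!
Expanding the determinant gives `(P u) ⬝ᵥ v = det (v, u, x, y)` for the Plücker matrix `P` of
`ℓ = ⟨x, y⟩`, so when `u ∉ ℓ` the dual vector `P u` cuts out exactly the plane `⟨u⟩ + ℓ`.
Hence the common kernel `S` of `P₁u, P₂u, P₃u` is `⋂ᵢ (⟨u⟩ + ℓᵢ)`, which contains `u`, and by
rank–nullity the three dual vectors are dependent iff `dim S ≥ 2`. A 2-space `W ∋ u` meets `ℓᵢ`
iff `W ⊆ ⟨u⟩ + ℓᵢ`, so the transversals through `u` are exactly the 2-spaces through `u` inside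
`S`, and these exist iff `dim S ≥ 2`.
-/

open Module Submodule

theorem Matrix.det_of_vecCons_eq_zero_iff {K : Type*} [Field K] {n : ℕ}
    {a : Fin n → Fin (n + 1) → K} (ha : LinearIndependent K a) (v : Fin (n + 1) → K) :
    (of (vecCons v a)).det = 0 ↔ v ∈ span K (Set.range a) := by
  rw [← not_iff_not, ← ne_eq, ← isUnit_iff_ne_zero, ← isUnit_iff_isUnit_det,
    ← linearIndependent_rows_iff_isUnit]
  exact linearIndependent_finCons.trans (and_iff_right ha)

theorem linearIndependent_iff_finrank_ker_mulVecLin_add_card {K m n : Type*} [Field K]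
    [Fintype m] [Fintype n] (φ : m → n → K) :
    LinearIndependent K φ ↔
      finrank K (LinearMap.ker (of φ).mulVecLin) + Fintype.card m = Fintype.card n := by
  classical
  have hrank : (of φ).rank + finrank K (LinearMap.ker (of φ).mulVecLin) = Fintype.card n := by
    simpa [Matrix.rank] using LinearMap.finrank_range_add_finrank_ker (of φ).mulVecLin
  have hrow : (of φ).rank = finrank K (span K (Set.range φ)) := rank_eq_finrank_span_row _
  rw [linearIndependent_iff_card_eq_finrank_span, Set.finrank]
  omega

section

variable {K V : Type*} [DivisionRing K] [AddCommGroup V] [Module K V]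

theorem Submodule.exists_mem_notMem_span_singleton_of_two_le_finrank {S : Submodule K V}
    (hS : 2 ≤ finrank K S) (u : V) : ∃ v ∈ S, v ∉ K ∙ u := by
  by_contra! h
  have hle := (finrank_mono h).trans (finrank_span_le_card ({u} : Set V))
  rw [Set.toFinset_singleton, Finset.card_singleton] at hle
  omega

theorem Submodule.inf_ne_bot_iff_le_span_singleton_sup {W ℓ : Submodule K V} {u : V}
    (hW : finrank K W = 2) (huW : u ∈ W) (hu : u ∉ ℓ) :
    W ⊓ ℓ ≠ ⊥ ↔ W ≤ K ∙ u ⊔ ℓ := by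
  constructor
  · intro hWℓ
    obtain ⟨z, hz, hz0⟩ := (Submodule.ne_bot_iff _).1 hWℓ
    obtain ⟨hzW, hzℓ⟩ := mem_inf.1 hz
    have hzu : LinearIndependent K ![z, u] :=
      (LinearIndependent.pair_iff' hz0).2 fun a h => hu (h ▸ ℓ.smul_mem a hzℓ)
    have hspan : span K {z, u} = W := by
      have : FiniteDimensional K W := .of_finrank_pos (by omega)
      refine eq_of_le_of_finrank_le (span_le.2 (Set.pair_subset hzW huW)) ?_
      rw [hW, ← range_cons_cons_empty, finrank_span_eq_card hzu, Fintype.card_fin]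
    rw [← hspan, span_le]
    exact Set.pair_subset (mem_sup_right hzℓ) (mem_sup_left (mem_span_singleton_self u))
  · intro hle
    obtain ⟨w, hwW, hwu⟩ := exists_mem_notMem_span_singleton_of_two_le_finrank hW.ge u
    obtain ⟨y, hy, z, hzℓ, rfl⟩ := mem_sup.1 (hle hwW)
    obtain ⟨a, rfl⟩ := mem_span_singleton.1 hy
    have hzW : z ∈ W := by simpa using W.sub_mem hwW (W.smul_mem a huW)
    refine (Submodule.ne_bot_iff _).2 ⟨z, mem_inf.2 ⟨hzW, hzℓ⟩, fun hz0 => hwu ?_⟩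
    simpa [hz0] using smul_mem _ a (mem_span_singleton_self u)

theorem Submodule.exists_finrank_eq_two_mem_le_iff [FiniteDimensional K V] {S : Submodule K V}
    {u : V} (hu0 : u ≠ 0) (huS : u ∈ S) :
    (∃ W : Submodule K V, finrank K W = 2 ∧ u ∈ W ∧ W ≤ S) ↔ 2 ≤ finrank K S := by
  constructor
  · rintro ⟨W, hW, -, hWS⟩
    exact hW ▸ finrank_mono hWS
  · intro hS
    obtain ⟨v, hvS, hvu⟩ := exists_mem_notMem_span_singleton_of_two_le_finrank hS u
    have huv : LinearIndependent K ![u, v] := (LinearIndependent.pair_iff' hu0).2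
      fun a h => hvu (h ▸ smul_mem _ a (mem_span_singleton_self u))
    refine ⟨span K {u, v}, ?_, subset_span (Set.mem_insert u _),
      span_le.2 (Set.pair_subset huS hvS)⟩
    rw [← range_cons_cons_empty, finrank_span_eq_card huv, Fintype.card_fin]

end

theorem dotProduct_primalMat_mulVec (x y u v : Fin 4 → ℂ) :
    (primalMat x y *ᵥ u) ⬝ᵥ v = (of ![v, u, x, y]).det := by
  rw [det_succ_row_zero]
  simp [Fin.sum_univ_four, det_fin_three, Fin.succAbove, primalMat, mulVec, dotProduct]
  ring

theorem dotProduct_primalMat_mulVec_eq_zero_iff {x y u : Fin 4 → ℂ}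
    (hxy : LinearIndependent ℂ ![x, y]) (hu : u ∉ span ℂ {x, y}) (v : Fin 4 → ℂ) :
    (primalMat x y *ᵥ u) ⬝ᵥ v = 0 ↔ v ∈ ℂ ∙ u ⊔ span ℂ {x, y} := by
  have hxyu : LinearIndependent ℂ ![u, x, y] :=
    linearIndependent_finCons.2 ⟨hxy, by rwa [range_cons_cons_empty]⟩
  rw [dotProduct_primalMat_mulVec, det_of_vecCons_eq_zero_iff hxyu, range_cons,
    range_cons_cons_empty, span_union]

theorem ker_mulVecLin_primalMat_mulVec {ι : Type*} {x y : ι → Fin 4 → ℂ}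
    (hind : ∀ i, LinearIndependent ℂ ![x i, y i]) {u : Fin 4 → ℂ}
    (hu : ∀ i, u ∉ span ℂ {x i, y i}) :
    LinearMap.ker (of fun i => primalMat (x i) (y i) *ᵥ u).mulVecLin =
      ⨅ i, ℂ ∙ u ⊔ span ℂ {x i, y i} := by
  ext v
  simp only [LinearMap.mem_ker, mulVecLin_apply, funext_iff, Pi.zero_apply, mem_iInf]
  exact forall_congr' fun i => dotProduct_primalMat_mulVec_eq_zero_iff (hind i) (hu i) v

/-- for a point `u` off three lines `ℓᵢ = span{xᵢ, yᵢ}`, the vectors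
`P₁u, P₂u, P₃u` are linearly dependent iff the three lines admit a transversal through `u`. -/
theorem dependent_iff_transversal_through_point
    (x y : Fin 3 → Fin 4 → ℂ)
    (hind : ∀ i, LinearIndependent ℂ ![x i, y i])
    (u : Fin 4 → ℂ)
    (hu : ∀ i, u ∉ Submodule.span ℂ {x i, y i}) :
    (¬ LinearIndependent ℂ
        ![primalMat (x 0) (y 0) *ᵥ u,
          primalMat (x 1) (y 1) *ᵥ u,
          primalMat (x 2) (y 2) *ᵥ u]) ↔
      ∃ W : Submodule ℂ (Fin 4 → ℂ), Module.finrank ℂ W = 2 ∧ u ∈ W ∧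
        ∀ i, W ⊓ Submodule.span ℂ {x i, y i} ≠ ⊥ := by
  have hrows : ![primalMat (x 0) (y 0) *ᵥ u, primalMat (x 1) (y 1) *ᵥ u,
      primalMat (x 2) (y 2) *ᵥ u] = fun i => primalMat (x i) (y i) *ᵥ u := by
    ext i : 1
    fin_cases i <;> rfl
  rw [hrows, linearIndependent_iff_finrank_ker_mulVecLin_add_card, Fintype.card_fin,
    Fintype.card_fin, ker_mulVecLin_primalMat_mulVec hind hu]
  set S := ⨅ i, ℂ ∙ u ⊔ span ℂ {x i, y i}
  have hu0 : u ≠ 0 := fun h => hu 0 (h ▸ zero_mem _)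
  have huS : u ∈ S := (mem_iInf _).2 fun i => mem_sup_left (mem_span_singleton_self u)
  have hS1 : 1 ≤ finrank ℂ S :=
    one_le_finrank_iff.2 ((Submodule.ne_bot_iff S).2 ⟨u, huS, hu0⟩)
  rw [show ¬finrank ℂ S + 3 = 4 ↔ 2 ≤ finrank ℂ S by omega,
    ← exists_finrank_eq_two_mem_le_iff hu0 huS]
  refine exists_congr fun W => and_congr_right fun hW => and_congr_right fun huW => ?_
  rw [le_iInf_iff]
  exact forall_congr' fun i => (inf_ne_bot_iff_le_span_singleton_sup hW huW (hu i)).symm
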